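/- If C(X,Y,Z,W) and C⊥(X,Y,Z,W) are polynomials satisfying the quaternary MacWilliams identity C(X,Y,Z,W) = (1/K) C⊥(Z+W, Z−W, (X+Y)/2, (X−Y)/2), with coefficient expansions C = ∑_{i,j} C_{i,j} X^{n−i} Y^i Z^{n−j} W^j and C⊥ = ∑_{r,s} C⊥_{r,s} X^{n−r} Y^r Z^{n−s} W^s, then the coefficients are related by C_{i,j} = (1/(2^n K)) ∑_{r,s=0}^{n} P_i(s) P_j(r) C⊥_{r,s}, where P_k is the binary Krawtchouk polynomial with parameter n. -/

import Mathlib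

/-- Binary Krawtchouk polynomial (q = 2) with parameter `n`, evaluated at a
natural number argument `x`. -/
def kraw (n k x : ℕ) : ℤ :=
  ∑ j ∈ Finset.range (k + 1),
    (-1 : ℤ) ^ j * (Nat.choose x j : ℤ) * (Nat.choose (n - x) (k - j) : ℤ)

/-!
Setting `X = Z = 1` turns both sides of the identity into polynomials in `Y` and `W`. By the
generating function `(1 - u)^r (1 + u)^(n - r) = ∑ᵢ P_i(r) uⁱ`, the term of `cp r s` on the right
expands as `2⁻ⁿ ∑_{a,b} P_a(s) P_b(r) Y^a W^b`, and comparing the coefficients of `Y^i W^j` on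
both sides gives the formula.
-/

open Polynomial Finset

theorem coeff_one_sub_X_pow {R : Type*} [CommRing R] (r k : ℕ) :
    ((1 - X : R[X]) ^ r).coeff k = (-1) ^ k * r.choose k := by
  have h : (1 - X : R[X]) = C (-1) * X + 1 := by simp [sub_eq_neg_add]
  simp only [h, add_pow, finsetSum_coeff, one_pow, mul_one, mul_pow, ← C_pow, ← C_eq_natCast,
    mul_right_comm _ (X ^ _), ← C_mul, coeff_C_mul_X_pow, sum_ite_eq, mem_range]
  split_ifs with hk
  · rfl
  · simp [Nat.choose_eq_zero_of_lt (by omega : r < k)]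

theorem coeff_one_sub_X_pow_mul_one_add_X_pow {R : Type*} [CommRing R] (n r i : ℕ) :
    ((1 - X : R[X]) ^ r * (1 + X) ^ (n - r)).coeff i = (kraw n i r : R) := by
  rw [coeff_mul, Nat.sum_antidiagonal_eq_sum_range_succ
    (fun a b => ((1 - X : R[X]) ^ r).coeff a * ((1 + X : R[X]) ^ (n - r)).coeff b)]
  simp only [coeff_one_sub_X_pow, coeff_one_add_X_pow, kraw]
  push_cast
  exact sum_congr rfl fun j _ => by ring

theorem one_sub_pow_mul_one_add_pow_eq_sum_kraw {R : Type*} [CommRing R] {n r : ℕ} (hr : r ≤ n)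
    (u : R) :
    (1 - u) ^ r * (1 + u) ^ (n - r) = ∑ i ∈ range (n + 1), (kraw n i r : R) * u ^ i := by
  have hdeg : ((1 - X : R[X]) ^ r * (1 + X) ^ (n - r)).natDegree < n + 1 := by
    compute_degree!; omega
  simpa [coeff_one_sub_X_pow_mul_one_add_X_pow] using eval_eq_sum_range' hdeg u

theorem eq_of_forall_sum_range_mul_pow_eq {R : Type*} [CommRing R] [IsDomain R] [Infinite R]
    {m : ℕ} {f g : ℕ → R} (h : ∀ y : R, ∑ k ∈ range m, f k * y ^ k = ∑ k ∈ range m, g k * y ^ k)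
    {i : ℕ} (hi : i < m) : f i = g i := by
  have hcoeff : ∀ p : ℕ → R, (∑ k ∈ range m, C (p k) * X ^ k).coeff i = p i := fun p => by
    simp [finsetSum_coeff, hi]
  have hpoly : ∑ k ∈ range m, C (f k) * X ^ k = ∑ k ∈ range m, C (g k) * X ^ k :=
    Polynomial.funext fun y => by simpa [eval_finsetSum] using h y
  simpa only [hcoeff] using congrArg (coeff · i) hpoly

theorem eq_of_forall_sum_range_sum_range_mul_pow_mul_pow_eq {R : Type*} [CommRing R] [IsDomain R]
    [Infinite R] {m : ℕ} {a b : ℕ → ℕ → R}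
    (h : ∀ y w : R, ∑ i ∈ range m, ∑ j ∈ range m, a i j * y ^ i * w ^ j =
      ∑ i ∈ range m, ∑ j ∈ range m, b i j * y ^ i * w ^ j)
    {i j : ℕ} (hi : i < m) (hj : j < m) : a i j = b i j := by
  refine eq_of_forall_sum_range_mul_pow_eq (f := a i) (g := b i) (fun w => ?_) hj
  refine eq_of_forall_sum_range_mul_pow_eq (f := fun i => ∑ k ∈ range m, a i k * w ^ k)
    (g := fun i => ∑ k ∈ range m, b i k * w ^ k) (fun y => ?_) hi
  simpa only [sum_mul, mul_right_comm _ (w ^ _)] using h y w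

theorem sum_sum_mul_sum_mul_sum {ι κ R : Type*} [CommSemiring R] (S : Finset ι) (T : Finset κ)
    (d : κ → κ → R) (f g : ι → κ → R) (u v : ι → R) :
    ∑ r ∈ T, ∑ s ∈ T, d r s * (∑ a ∈ S, f a s * u a) * (∑ b ∈ S, g b r * v b) =
      ∑ a ∈ S, ∑ b ∈ S, (∑ r ∈ T, ∑ s ∈ T, f a s * g b r * d r s) * u a * v b := by
  simp only [mul_sum, sum_mul, ← sum_product']
  refine sum_nbij' (fun x => (x.2.2.2, x.2.2.1, x.1, x.2.1)) (fun x => (x.2.2.1, x.2.2.2, x.2.1, x.1))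
    ?_ ?_ ?_ ?_ (fun _ _ => by ring) <;> simp +contextual

theorem div_pow_sub_mul_div_pow {K : Type*} [Field K] (a b c : K) {n s : ℕ} (hs : s ≤ n) :
    (a / c) ^ (n - s) * (b / c) ^ s = a ^ (n - s) * b ^ s / c ^ n := by
  rw [div_pow, div_pow, div_mul_div_comm, ← pow_add, Nat.sub_add_cancel hs]

theorem coefficient_macwilliams_general (n : ℕ) (K : ℝ)
    (c cp : ℕ → ℕ → ℝ)
    (hmac : ∀ X Y Z W : ℝ,
      (∑ i ∈ Finset.range (n + 1), ∑ j ∈ Finset.range (n + 1),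
        c i j * X ^ (n - i) * Y ^ i * Z ^ (n - j) * W ^ j)
      = (1 / K) *
        ∑ r ∈ Finset.range (n + 1), ∑ s ∈ Finset.range (n + 1),
          cp r s * (Z + W) ^ (n - r) * (Z - W) ^ r *
            ((X + Y) / 2) ^ (n - s) * ((X - Y) / 2) ^ s) :
    ∀ i j, i ≤ n → j ≤ n →
      c i j = (1 / (2 ^ n * K)) *
        ∑ r ∈ Finset.range (n + 1), ∑ s ∈ Finset.range (n + 1),
          (kraw n i s : ℝ) * (kraw n j r : ℝ) * cp r s := by
  intro i j hi hj
  apply eq_of_forall_sum_range_sum_range_mul_pow_mul_pow_eq _ (Nat.lt_add_one_of_le hi)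
    (Nat.lt_add_one_of_le hj)
  intro y w
  calc ∑ i ∈ range (n + 1), ∑ j ∈ range (n + 1), c i j * y ^ i * w ^ j
      = 1 / K * ∑ r ∈ range (n + 1), ∑ s ∈ range (n + 1),
          cp r s * (1 + w) ^ (n - r) * (1 - w) ^ r * ((1 + y) / 2) ^ (n - s) *
            ((1 - y) / 2) ^ s := by simpa using hmac 1 y 1 w
    _ = 1 / (2 ^ n * K) * ∑ r ∈ range (n + 1), ∑ s ∈ range (n + 1),
          cp r s * (∑ a ∈ range (n + 1), (kraw n a s : ℝ) * y ^ a) *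
            (∑ b ∈ range (n + 1), (kraw n b r : ℝ) * w ^ b) := by
      rw [mul_sum, mul_sum]
      refine sum_congr rfl fun r hr => ?_
      rw [mul_sum, mul_sum]
      refine sum_congr rfl fun s hs => ?_
      rw [mem_range_succ_iff] at hr hs
      rw [mul_assoc _ (((1 + y) / 2) ^ _), div_pow_sub_mul_div_pow _ _ _ hs,
        ← one_sub_pow_mul_one_add_pow_eq_sum_kraw hs, ← one_sub_pow_mul_one_add_pow_eq_sum_kraw hr]
      ring
    _ = _ := by
      rw [sum_sum_mul_sum_mul_sum, mul_sum]
      refine sum_congr rfl fun a _ => ?_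
      rw [mul_sum]
      exact sum_congr rfl fun b _ => by ring

/-- If the double weight enumerators satisfy the quaternary MacWilliams
identity `C(X,Y,Z,W) = (1/K) C⊥(Z+W, Z-W, (X+Y)/2, (X-Y)/2)`, then the
coefficients satisfy `C_{i,j} = (1/(2^n K)) ∑_{r,s} P_i(s) P_j(r) C⊥_{r,s}`. -/
theorem coefficient_macwilliams (n : ℕ) (K : ℝ) (hK : 0 < K)
    (c cp : ℕ → ℕ → ℝ)
    (hmac : ∀ X Y Z W : ℝ,
      (∑ i ∈ Finset.range (n + 1), ∑ j ∈ Finset.range (n + 1),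
        c i j * X ^ (n - i) * Y ^ i * Z ^ (n - j) * W ^ j)
      = (1 / K) *
        ∑ r ∈ Finset.range (n + 1), ∑ s ∈ Finset.range (n + 1),
          cp r s * (Z + W) ^ (n - r) * (Z - W) ^ r *
            ((X + Y) / 2) ^ (n - s) * ((X - Y) / 2) ^ s) :
    ∀ i j, i ≤ n → j ≤ n →
      c i j = (1 / (2 ^ n * K)) *
        ∑ r ∈ Finset.range (n + 1), ∑ s ∈ Finset.range (n + 1),
          (kraw n i s : ℝ) * (kraw n j r : ℝ) * cp r s :=
  coefficient_macwilliams_general n K c cp hmac
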